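/- (Characterization of the dual set, second part.) In the star setup, let T be an n-dimensional face of the triangulation containing 0 with 0 ≤ n < d, and assume some point of T lies in the topological interior of N(T). Let 𝒮 be the collection of (n+1)-dimensional faces of the triangulation that contain T (i.e. simplices S = conv(T ∪ {z}) with z ∈ Z a vertex of some K ∈ 𝒦 satisfying T ⊆ K and S ⊆ K). Let P := { w ∈ ℝ^d : ⟨w, z⟩ = γ(z) for all z ∈ T }, an affine subspace containing T*. Then the boundary of T* relative to P equals the union ⋃_{S ∈ 𝒮} S* of the dual sets of the members of 𝒮. -/

import Mathlib

open Set Metric MeasureTheory Filter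
open scoped RealInnerProductSpace

noncomputable section

/-- The closed simplex with vertex set `{0} ∪ S`. -/
def splx {d : ℕ} (S : Finset (EuclideanSpace ℝ (Fin d))) : Set (EuclideanSpace ℝ (Fin d)) :=
  convexHull ℝ (insert (0 : EuclideanSpace ℝ (Fin d)) (S : Set (EuclideanSpace ℝ (Fin d))))

/-- **Star setup**: a conforming finite collection of `d`-simplices sharing the vertex `0`
whose union is a neighborhood of `0`, together with a convex function `γ` vanishing at `0`
which is affine on each simplex.  Each simplex is recorded by its finset `S` of nonzero
vertices, the simplex itself being `conv({0} ∪ S)`. -/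
structure StarSetup (d : ℕ) where
  /-- The collection of (vertex sets of) `d`-simplices of the star. -/
  K : Finset (Finset (EuclideanSpace ℝ (Fin d)))
  /-- The piecewise affine convex function. -/
  γ : EuclideanSpace ℝ (Fin d) → ℝ
  K_nonempty : K.Nonempty
  card_eq : ∀ S ∈ K, S.card = d
  zero_not_mem : ∀ S ∈ K, (0 : EuclideanSpace ℝ (Fin d)) ∉ S
  affine_indep : ∀ S ∈ K, AffineIndependent ℝ
    (fun p : (insert (0 : EuclideanSpace ℝ (Fin d)) (S : Set (EuclideanSpace ℝ (Fin d))) :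
      Set (EuclideanSpace ℝ (Fin d))) => (p : EuclideanSpace ℝ (Fin d)))
  conforming : ∀ S₁ ∈ K, ∀ S₂ ∈ K, splx S₁ ∩ splx S₂ =
    convexHull ℝ (insert (0 : EuclideanSpace ℝ (Fin d))
      ((S₁ : Set (EuclideanSpace ℝ (Fin d))) ∩ (S₂ : Set (EuclideanSpace ℝ (Fin d)))))
  nhd : (⋃ S ∈ K, splx S) ∈ nhds (0 : EuclideanSpace ℝ (Fin d))
  convex_γ : ConvexOn ℝ Set.univ γ
  γ_zero : γ 0 = 0
  affine_on : ∀ S ∈ K, ∃ (p : EuclideanSpace ℝ (Fin d)) (c : ℝ),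
    ∀ x ∈ splx S, γ x = ⟪p, x⟫ + c

namespace StarSetup

variable {d : ℕ} (st : StarSetup d)

/-- The star `ω = ⋃_{K ∈ 𝒦} K` around the origin. -/
def ω : Set (EuclideanSpace ℝ (Fin d)) := ⋃ S ∈ st.K, splx S

/-- The set of nonzero vertices `Z` of the star. -/
def Z : Set (EuclideanSpace ℝ (Fin d)) := ⋃ S ∈ st.K, (S : Set (EuclideanSpace ℝ (Fin d)))

/-- The local subdifferential `∂γ(0) = { w : ⟨w, x⟩ ≤ γ(x) for all x ∈ ω }`. -/
def subdiff : Set (EuclideanSpace ℝ (Fin d)) :=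
  { w | ∀ x ∈ st.ω, ⟪w, x⟫ ≤ st.γ x }

/-- `S` records a face `conv({0} ∪ S)` of the triangulation containing `0`. -/
def IsFace (S : Finset (EuclideanSpace ℝ (Fin d))) : Prop :=
  ∃ S' ∈ st.K, S ⊆ S'

/-- The dual set `T* = { w ∈ ∂γ(0) : ⟨w, z⟩ = γ(z) for all z ∈ T }` of the face
`T = conv({0} ∪ S)`. -/
def dual (S : Finset (EuclideanSpace ℝ (Fin d))) : Set (EuclideanSpace ℝ (Fin d)) :=
  { w ∈ st.subdiff | ∀ z ∈ splx S, ⟪w, z⟫ = st.γ z }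

/-- `N(T) = ⋃ { K ∈ 𝒦 : T ⊆ K }` for the face `T = conv({0} ∪ S)`. -/
def N (S : Finset (EuclideanSpace ℝ (Fin d))) : Set (EuclideanSpace ℝ (Fin d)) :=
  ⋃ S' ∈ {S' : Finset (EuclideanSpace ℝ (Fin d)) | S' ∈ st.K ∧ splx S ⊆ splx S'}, splx S'

end StarSetup



namespace StarSetup

variable {d : ℕ} (st : StarSetup d)

lemma splx_mono {S T : Finset (EuclideanSpace ℝ (Fin d))} (h : S ⊆ T) : splx S ⊆ splx T :=
  convexHull_mono (Set.insert_subset_insert (Finset.coe_subset.mpr h))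

lemma zero_mem_splx (S : Finset (EuclideanSpace ℝ (Fin d))) : (0 : EuclideanSpace ℝ (Fin d)) ∈ splx S :=
  subset_convexHull _ _ (Set.mem_insert _ _)

lemma vertex_mem_splx {S : Finset (EuclideanSpace ℝ (Fin d))} {z : EuclideanSpace ℝ (Fin d)}
    (hz : z ∈ S) : z ∈ splx S :=
  subset_convexHull _ _ (Set.mem_insert_of_mem _ hz)

lemma splx_subset_ω {S : Finset (EuclideanSpace ℝ (Fin d))} (hS : S ∈ st.K) : splx S ⊆ st.ω :=
  Set.subset_biUnion_of_mem (u := fun S => splx S) hS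

lemma splx_subset_ω' {S : Finset (EuclideanSpace ℝ (Fin d))} (hS : st.IsFace S) :
    splx S ⊆ st.ω := by
  obtain ⟨S', hS', hsub⟩ := hS
  exact (splx_mono hsub).trans (st.splx_subset_ω hS')

lemma exists_linear {S : Finset (EuclideanSpace ℝ (Fin d))} (hS : S ∈ st.K) :
    ∃ p : EuclideanSpace ℝ (Fin d), ∀ x ∈ splx S, st.γ x = ⟪p, x⟫ := by
  obtain ⟨p, c, h⟩ := st.affine_on S hS
  have h0 := h 0 (zero_mem_splx S)
  rw [st.γ_zero, inner_zero_right] at h0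
  refine ⟨p, fun x hx => ?_⟩
  rw [h x hx]; rw [zero_add] at h0; rw [← h0, add_zero]

lemma splx_subset_span (S : Finset (EuclideanSpace ℝ (Fin d))) :
    splx S ⊆ (Submodule.span ℝ (S : Set (EuclideanSpace ℝ (Fin d))) : Set (EuclideanSpace ℝ (Fin d))) := by
  apply convexHull_min _ (Submodule.span ℝ (S : Set (EuclideanSpace ℝ (Fin d)))).convex
  exact Set.insert_subset (Submodule.zero_mem _) Submodule.subset_span

end StarSetup

-- chunk 2
namespace StarSetup
variable {d : ℕ} (st : StarSetup d)

lemma inner_le_on_splx {S : Finset (EuclideanSpace ℝ (Fin d))} (hS : S ∈ st.K)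
    {w : EuclideanSpace ℝ (Fin d)} (h : ∀ z ∈ S, ⟪w, z⟫ ≤ st.γ z) :
    ∀ x ∈ splx S, ⟪w, x⟫ ≤ st.γ x := by
  obtain ⟨p, hp⟩ := st.exists_linear hS
  intro x hx
  rw [hp x hx]
  have hlin : IsLinearMap ℝ (fun y : EuclideanSpace ℝ (Fin d) => ⟪w - p, y⟫) :=
    ⟨fun a b => inner_add_right _ _ _, fun c a => real_inner_smul_right _ _ _⟩
  have hC : Convex ℝ {y : EuclideanSpace ℝ (Fin d) | ⟪w, y⟫ ≤ ⟪p, y⟫} := by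
    have := convex_halfSpace_le hlin 0
    convert this using 1
    ext y
    simp [inner_sub_left, sub_nonpos]
    ext y
    simp [inner_sub_left, sub_nonpos]
  have hsub : insert (0 : EuclideanSpace ℝ (Fin d)) (S : Set (EuclideanSpace ℝ (Fin d))) ⊆
      {y | ⟪w, y⟫ ≤ ⟪p, y⟫} := by
    rintro y (rfl | hy)
    · simp
    · have := h y hy
      calc ⟪w, y⟫ ≤ st.γ y := this
        _ = ⟪p, y⟫ := hp y (vertex_mem_splx hy)
  exact convexHull_min hsub hC hx

lemma inner_eq_on_splx {S S' : Finset (EuclideanSpace ℝ (Fin d))} (hS' : S' ∈ st.K)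
    (hsub : S ⊆ S') {w : EuclideanSpace ℝ (Fin d)} (h : ∀ z ∈ S, ⟪w, z⟫ = st.γ z) :
    ∀ x ∈ splx S, ⟪w, x⟫ = st.γ x := by
  obtain ⟨p, hp⟩ := st.exists_linear hS'
  intro x hx
  have hx' : x ∈ splx S' := splx_mono hsub hx
  rw [hp x hx']
  have hlin : IsLinearMap ℝ (fun y : EuclideanSpace ℝ (Fin d) => ⟪w - p, y⟫) :=
    ⟨fun a b => inner_add_right _ _ _, fun c a => real_inner_smul_right _ _ _⟩
  have hC : Convex ℝ {y : EuclideanSpace ℝ (Fin d) | ⟪w, y⟫ = ⟪p, y⟫} := by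
    have := convex_hyperplane hlin 0
    convert this using 1
    ext y
    simp [inner_sub_left, sub_eq_zero]
    ext y
    simp [inner_sub_left, sub_eq_zero]
  have hsub2 : insert (0 : EuclideanSpace ℝ (Fin d)) (S : Set (EuclideanSpace ℝ (Fin d))) ⊆
      {y | ⟪w, y⟫ = ⟪p, y⟫} := by
    rintro y (rfl | hy)
    · simp
    · calc ⟪w, y⟫ = st.γ y := h y hy
        _ = ⟪p, y⟫ := hp y (splx_mono hsub (vertex_mem_splx hy))
  exact convexHull_min hsub2 hC hx

/-- `w ∈ subdiff` iff all vertex inequalities hold. -/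
lemma mem_subdiff_of_vertex {w : EuclideanSpace ℝ (Fin d)}
    (h : ∀ S' ∈ st.K, ∀ z ∈ S', ⟪w, z⟫ ≤ st.γ z) : w ∈ st.subdiff := by
  intro x hx
  obtain ⟨S', hS', hxS⟩ : ∃ S' ∈ st.K, x ∈ splx S' := by
    simpa [ω, Set.mem_iUnion] using hx
  exact st.inner_le_on_splx hS' (h S' hS') x hxS

/-- A vertex of a simplex lies in `ω`. -/
lemma vertex_mem_ω {S : Finset (EuclideanSpace ℝ (Fin d))} (hS : S ∈ st.K)
    {z : EuclideanSpace ℝ (Fin d)} (hz : z ∈ S) : z ∈ st.ω :=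
  st.splx_subset_ω hS (vertex_mem_splx hz)

end StarSetup
-- chunk 3
namespace StarSetup
variable {d : ℕ} (st : StarSetup d)

open Classical in
/-- Vertex extraction: if the face `splx S` (with `S ⊆ S₁ ∈ K`) is contained in `splx S''`
for `S'' ∈ K`, then `S ⊆ S''`. -/
lemma subset_of_splx_subset {S S₁ S'' : Finset (EuclideanSpace ℝ (Fin d))}
    (hS₁ : S₁ ∈ st.K) (hsub : S ⊆ S₁) (hS'' : S'' ∈ st.K)
    (h : splx S ⊆ splx S'') : S ⊆ S'' := by
  intro s hs
  have hindep : AffineIndependent ℝ ((↑) : (insert (0 : EuclideanSpace ℝ (Fin d)) S₁ : Finset _) → EuclideanSpace ℝ (Fin d)) := by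
    have := st.affine_indep S₁ hS₁
    rw [← Finset.coe_insert] at this
    exact this
  set t₁ : Finset (EuclideanSpace ℝ (Fin d)) := {s} with ht₁
  set t₂ : Finset (EuclideanSpace ℝ (Fin d)) := insert 0 (S₁ ∩ S'') with ht₂
  have ht₁sub : t₁ ⊆ insert 0 S₁ := by
    simp [ht₁, Finset.singleton_subset_iff, Finset.mem_insert, hsub hs]
  have ht₂sub : t₂ ⊆ insert 0 S₁ := by
    intro x hx
    rcases Finset.mem_insert.mp hx with rfl | hx
    · exact Finset.mem_insert_self _ _
    · exact Finset.mem_insert_of_mem (Finset.mem_inter.mp hx).1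
  have key := hindep.convexHull_inter ht₁sub ht₂sub
  have hs_mem : s ∈ convexHull ℝ (t₁ : Set (EuclideanSpace ℝ (Fin d))) ∩
      convexHull ℝ (t₂ : Set (EuclideanSpace ℝ (Fin d))) := by
    constructor
    · exact subset_convexHull _ _ (by simp [ht₁])
    · have h1 : s ∈ splx S := vertex_mem_splx hs
      have h2 : s ∈ splx S₁ ∩ splx S'' := ⟨splx_mono hsub h1, h h1⟩
      rw [st.conforming S₁ hS₁ S'' hS''] at h2
      have : (t₂ : Set (EuclideanSpace ℝ (Fin d))) =
          insert 0 ((S₁ : Set (EuclideanSpace ℝ (Fin d))) ∩ (S'' : Set (EuclideanSpace ℝ (Fin d)))) := by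
        simp [ht₂]
      rw [this]
      exact h2
  rw [← key] at hs_mem
  have hst₂ : s ∈ t₂ := by
    by_contra hcon
    have hempty : ((t₁ : Set (EuclideanSpace ℝ (Fin d))) ∩ (t₂ : Set (EuclideanSpace ℝ (Fin d)))) = ∅ := by
      ext x
      simp only [Set.mem_inter_iff, Finset.coe_singleton, Set.mem_singleton_iff,
        Set.mem_empty_iff_false, iff_false, not_and, ht₁]
      rintro rfl
      exact fun hx => hcon (by exact_mod_cast hx)
    rw [hempty, convexHull_empty] at hs_mem
    exact hs_mem
  rcases Finset.mem_insert.mp hst₂ with rfl | hx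
  · exact absurd (hsub hs) (st.zero_not_mem S₁ hS₁)
  · exact (Finset.mem_inter.mp hx).2

end StarSetup
-- chunk 4
namespace StarSetup
variable {d : ℕ} (st : StarSetup d)

/-- A vertex of a `K`-simplex is not in the span of the other vertices. -/
lemma not_mem_span {S'' : Finset (EuclideanSpace ℝ (Fin d))} (hS'' : S'' ∈ st.K)
    {z : EuclideanSpace ℝ (Fin d)} (hz : z ∈ S'') {T : Set (EuclideanSpace ℝ (Fin d))}
    (hT : T ⊆ (S'' : Set (EuclideanSpace ℝ (Fin d)))) (hzT : z ∉ T) :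
    z ∉ Submodule.span ℝ T := by
  intro hmem
  have hindep := st.affine_indep S'' hS''
  have hz0 : z ≠ 0 := fun h => st.zero_not_mem S'' hS'' (h ▸ hz)
  set ι := (insert (0 : EuclideanSpace ℝ (Fin d)) (S'' : Set (EuclideanSpace ℝ (Fin d))) :
    Set (EuclideanSpace ℝ (Fin d)))
  set i : ι := ⟨z, Set.mem_insert_of_mem _ hz⟩ with hi
  have hkey := hindep.notMem_affineSpan_diff i Set.univ
  apply hkey
  have himg : insert (0 : EuclideanSpace ℝ (Fin d))
      ((S'' : Set (EuclideanSpace ℝ (Fin d))) \ {z}) ⊆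
      (fun p : ι => (p : EuclideanSpace ℝ (Fin d))) '' (Set.univ \ {i}) := by
    rintro x (rfl | hx)
    · refine ⟨⟨0, Set.mem_insert _ _⟩, ⟨trivial, ?_⟩, rfl⟩
      simp only [Set.mem_singleton_iff, hi]
      intro hcon
      exact hz0 (congrArg Subtype.val hcon).symm
    · rw [Set.mem_diff, Set.mem_singleton_iff] at hx
      refine ⟨⟨x, Set.mem_insert_of_mem _ hx.1⟩, ⟨trivial, ?_⟩, rfl⟩
      simp only [Set.mem_singleton_iff, hi]
      intro hcon
      exact hx.2 (congrArg Subtype.val hcon)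
  have hspan : z ∈ affineSpan ℝ (insert (0 : EuclideanSpace ℝ (Fin d))
      ((S'' : Set (EuclideanSpace ℝ (Fin d))) \ {z})) := by
    have : z ∈ (affineSpan ℝ (insert (0 : EuclideanSpace ℝ (Fin d))
        ((S'' : Set (EuclideanSpace ℝ (Fin d))) \ {z})) : Set (EuclideanSpace ℝ (Fin d))) := by
      rw [affineSpan_insert_zero]
      refine Submodule.span_mono (fun x hx => ?_) hmem
      refine Set.mem_diff_of_mem (hT hx) ?_
      simp only [Set.mem_singleton_iff]
      rintro rfl
      exact hzT hx
    exact this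
  exact affineSpan_mono ℝ himg hspan

end StarSetup
-- chunk 5 : topology in the subtype
namespace StarSetup
variable {d : ℕ} (st : StarSetup d) (S : Finset (EuclideanSpace ℝ (Fin d)))

/-- Two points of `P` have the same inner product against anything in `span S`. -/
lemma inner_eq_of_mem_span
    (w w' : {w : EuclideanSpace ℝ (Fin d) // ∀ z ∈ splx S, ⟪w, z⟫ = st.γ z})
    {z : EuclideanSpace ℝ (Fin d)}
    (hz : z ∈ Submodule.span ℝ (S : Set (EuclideanSpace ℝ (Fin d)))) :
    ⟪(w' : EuclideanSpace ℝ (Fin d)), z⟫ = ⟪(w : EuclideanSpace ℝ (Fin d)), z⟫ := by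
  have hker : Submodule.span ℝ (S : Set (EuclideanSpace ℝ (Fin d))) ≤
      LinearMap.ker (innerSL ℝ ((w' : EuclideanSpace ℝ (Fin d)) - w)).toLinearMap := by
    rw [Submodule.span_le]
    intro s hs
    have h1 := w.2 s (vertex_mem_splx hs)
    have h2 := w'.2 s (vertex_mem_splx hs)
    simp only [SetLike.mem_coe, LinearMap.mem_ker, ContinuousLinearMap.coe_coe, innerSL_apply_apply]
    rw [inner_sub_left, h1, h2, sub_self]
  have := hker hz
  simp only [LinearMap.mem_ker, ContinuousLinearMap.coe_coe, innerSL_apply_apply,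
    inner_sub_left, sub_eq_zero] at this
  exact this

lemma isClosed_subdiff : IsClosed st.subdiff := by
  have : st.subdiff = ⋂ x ∈ st.ω, {w : EuclideanSpace ℝ (Fin d) | ⟪w, x⟫ ≤ st.γ x} := by
    ext w; simp [subdiff]
  rw [this]
  exact isClosed_biInter fun x _ =>
    isClosed_le (Continuous.inner continuous_id continuous_const) continuous_const

open Classical in
lemma mem_interior_of_strict
    (w : {w : EuclideanSpace ℝ (Fin d) // ∀ z ∈ splx S, ⟪w, z⟫ = st.γ z})
    (hw : (w : EuclideanSpace ℝ (Fin d)) ∈ st.subdiff)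
    (hstrict : ∀ z, (∃ S' ∈ st.K, z ∈ S') →
      z ∉ Submodule.span ℝ (S : Set (EuclideanSpace ℝ (Fin d))) →
      ⟪(w : EuclideanSpace ℝ (Fin d)), z⟫ < st.γ z) :
    w ∈ interior {w : {w : EuclideanSpace ℝ (Fin d) // ∀ z ∈ splx S, ⟪w, z⟫ = st.γ z} |
      (w : EuclideanSpace ℝ (Fin d)) ∈ st.subdiff} := by
  set Z' : Finset (EuclideanSpace ℝ (Fin d)) :=
    (st.K.sup id).filter
      (fun z => z ∉ Submodule.span ℝ (S : Set (EuclideanSpace ℝ (Fin d)))) with hZ'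
  set U : Set {w : EuclideanSpace ℝ (Fin d) // ∀ z ∈ splx S, ⟪w, z⟫ = st.γ z} :=
    ⋂ z ∈ Z', {w' | ⟪(w' : EuclideanSpace ℝ (Fin d)), z⟫ < st.γ z} with hU
  have hUopen : IsOpen U := by
    refine isOpen_biInter_finset fun z _ => ?_
    exact isOpen_lt (Continuous.inner continuous_subtype_val continuous_const) continuous_const
  have hwU : w ∈ U := by
    rw [hU]
    refine Set.mem_iInter₂.mpr fun z hz => ?_
    rw [hZ', Finset.mem_filter, Finset.mem_sup] at hz
    exact hstrict z (by simpa using hz.1) hz.2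
  refine interior_maximal ?_ hUopen hwU
  intro w' hw'
  refine st.mem_subdiff_of_vertex fun S' hS' z hz => ?_
  by_cases hspan : z ∈ Submodule.span ℝ (S : Set (EuclideanSpace ℝ (Fin d)))
  · rw [st.inner_eq_of_mem_span S w w' hspan]
    exact hw z (st.vertex_mem_ω hS' hz)
  · have hzZ' : z ∈ Z' := by
      rw [hZ', Finset.mem_filter, Finset.mem_sup]
      exact ⟨⟨S', hS', by simpa using hz⟩, hspan⟩
    have := Set.mem_iInter₂.mp hw' z hzZ'
    exact le_of_lt this

lemma not_mem_interior
    (w : {w : EuclideanSpace ℝ (Fin d) // ∀ z ∈ splx S, ⟪w, z⟫ = st.γ z})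
    {z₀ : EuclideanSpace ℝ (Fin d)} (hz₀ω : z₀ ∈ st.ω)
    (hz₀span : z₀ ∉ Submodule.span ℝ (S : Set (EuclideanSpace ℝ (Fin d))))
    (heq : ⟪(w : EuclideanSpace ℝ (Fin d)), z₀⟫ = st.γ z₀) :
    w ∉ interior {w : {w : EuclideanSpace ℝ (Fin d) // ∀ z ∈ splx S, ⟪w, z⟫ = st.γ z} |
      (w : EuclideanSpace ℝ (Fin d)) ∈ st.subdiff} := by
  intro hint
  set W := Submodule.span ℝ (S : Set (EuclideanSpace ℝ (Fin d))) with hW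
  set u : EuclideanSpace ℝ (Fin d) := z₀ - (Submodule.orthogonalProjectionOnto W z₀ : EuclideanSpace ℝ (Fin d))
    with hu
  have hu_orth : u ∈ Wᗮ := by exact Submodule.sub_starProjection_mem_orthogonal (K := W) z₀
  have hu_ne : u ≠ 0 := by
    intro h
    apply hz₀span
    have : z₀ = (Submodule.orthogonalProjectionOnto W z₀ : EuclideanSpace ℝ (Fin d)) := by
      rwa [hu, sub_eq_zero] at h
    rw [this]; exact (Submodule.orthogonalProjectionOnto W z₀).2
  have hu_inner : ⟪u, z₀⟫ = ‖u‖ ^ 2 := by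
    have hz₀ : z₀ = u + (Submodule.orthogonalProjectionOnto W z₀ : EuclideanSpace ℝ (Fin d)) := by
      rw [hu]; abel
    rw [hz₀, inner_add_right]
    rw [Submodule.inner_left_of_mem_orthogonal (Submodule.orthogonalProjectionOnto W z₀).2 hu_orth]
    rw [real_inner_self_eq_norm_sq]
    ring
  have memP : ∀ t : ℝ, ∀ z ∈ splx S,
      ⟪(w : EuclideanSpace ℝ (Fin d)) + t • u, z⟫ = st.γ z := by
    intro t z hz
    have hzW : z ∈ W := splx_subset_span S hz
    rw [inner_add_left, real_inner_smul_left, Submodule.inner_left_of_mem_orthogonal hzW hu_orth,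
      mul_zero, add_zero]
    exact w.2 z hz
  set φ : ℝ → {w : EuclideanSpace ℝ (Fin d) // ∀ z ∈ splx S, ⟪w, z⟫ = st.γ z} :=
    fun t => ⟨(w : EuclideanSpace ℝ (Fin d)) + t • u, memP t⟩ with hφ
  have hφcont : Continuous φ := by
    apply Continuous.subtype_mk
    exact continuous_const.add (continuous_id.smul continuous_const)
  have hφ0 : φ 0 = w := by
    rw [hφ]; ext1; simp
  have hpre : φ ⁻¹' (interior {w : {w : EuclideanSpace ℝ (Fin d) // ∀ z ∈ splx S, ⟪w, z⟫ = st.γ z} |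
      (w : EuclideanSpace ℝ (Fin d)) ∈ st.subdiff}) ∈ nhds (0 : ℝ) := by
    apply hφcont.continuousAt.preimage_mem_nhds
    rw [hφ0]
    exact isOpen_interior.mem_nhds hint
  obtain ⟨ε, hε, hball⟩ := Metric.mem_nhds_iff.mp hpre
  have htmem : (ε / 2 : ℝ) ∈ Metric.ball (0 : ℝ) ε := by
    rw [Metric.mem_ball, Real.dist_eq, sub_zero, abs_of_pos (by linarith)]
    linarith
  have hφt := hball htmem
  have hsub : (φ (ε / 2) : EuclideanSpace ℝ (Fin d)) ∈ st.subdiff := by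
    have : φ (ε / 2) ∈ {w : {w : EuclideanSpace ℝ (Fin d) // ∀ z ∈ splx S, ⟪w, z⟫ = st.γ z} |
        (w : EuclideanSpace ℝ (Fin d)) ∈ st.subdiff} := interior_subset hφt
    exact this
  have hle := hsub z₀ hz₀ω
  rw [hφ] at hle
  simp only at hle
  rw [inner_add_left, real_inner_smul_left, hu_inner, heq] at hle
  have hpos : 0 < ε / 2 * ‖u‖ ^ 2 := by
    apply mul_pos (by linarith)
    have := norm_pos_iff.mpr hu_ne
    positivity
  linarith

end StarSetup
-- chunk 6 : frontier characterization
namespace StarSetup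
variable {d : ℕ} (st : StarSetup d) (S : Finset (EuclideanSpace ℝ (Fin d)))

lemma frontier_char
    (w : {w : EuclideanSpace ℝ (Fin d) // ∀ z ∈ splx S, ⟪w, z⟫ = st.γ z}) :
    w ∈ frontier {w : {w : EuclideanSpace ℝ (Fin d) // ∀ z ∈ splx S, ⟪w, z⟫ = st.γ z} |
        (w : EuclideanSpace ℝ (Fin d)) ∈ st.subdiff} ↔
      (w : EuclideanSpace ℝ (Fin d)) ∈ st.subdiff ∧
        ∃ z, (∃ S' ∈ st.K, z ∈ S') ∧
          z ∉ Submodule.span ℝ (S : Set (EuclideanSpace ℝ (Fin d))) ∧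
          ⟪(w : EuclideanSpace ℝ (Fin d)), z⟫ = st.γ z := by
  have hAclosed : IsClosed {w : {w : EuclideanSpace ℝ (Fin d) // ∀ z ∈ splx S, ⟪w, z⟫ = st.γ z} |
      (w : EuclideanSpace ℝ (Fin d)) ∈ st.subdiff} :=
    st.isClosed_subdiff.preimage continuous_subtype_val
  rw [hAclosed.frontier_eq]
  constructor
  · rintro ⟨hwA, hwint⟩
    refine ⟨hwA, ?_⟩
    by_contra hcon
    push_neg at hcon
    apply hwint
    refine st.mem_interior_of_strict S w hwA fun z hz hspan => ?_
    obtain ⟨S', hS', hzS'⟩ := hz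
    have hle : ⟪(w : EuclideanSpace ℝ (Fin d)), z⟫ ≤ st.γ z := hwA z (st.vertex_mem_ω hS' hzS')
    exact lt_of_le_of_ne hle (hcon z ⟨S', hS', hzS'⟩ hspan)
  · rintro ⟨hwA, z, ⟨S', hS', hzS'⟩, hspan, heq⟩
    exact ⟨hwA, st.not_mem_interior S w (st.vertex_mem_ω hS' hzS') hspan heq⟩

end StarSetup
-- chunk 7 : geometric core
namespace StarSetup
variable {d : ℕ} (st : StarSetup d)

open Classical in
lemma geometric_core {S S₁ : Finset (EuclideanSpace ℝ (Fin d))} (hS₁ : S₁ ∈ st.K)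
    (hsub : S ⊆ S₁) {x₀ : EuclideanSpace ℝ (Fin d)} (hx₀S : x₀ ∈ splx S)
    (hx₀int : x₀ ∈ interior (st.N S)) {v : EuclideanSpace ℝ (Fin d)} (hv : v ∈ st.subdiff)
    (hvS : ∀ x ∈ splx S, ⟪v, x⟫ = st.γ x) {z₀ : EuclideanSpace ℝ (Fin d)}
    (hz₀span : z₀ ∉ Submodule.span ℝ (S : Set (EuclideanSpace ℝ (Fin d))))
    (hz₀eq : ⟪v, z₀⟫ = st.γ z₀) :
    ∃ z' S'', S'' ∈ st.K ∧ S ⊆ S'' ∧ z' ∈ S'' ∧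
      z' ∉ Submodule.span ℝ (S : Set (EuclideanSpace ℝ (Fin d))) ∧ ⟪v, z'⟫ = st.γ z' := by
  have hx₀span : x₀ ∈ Submodule.span ℝ (S : Set (EuclideanSpace ℝ (Fin d))) :=
    splx_subset_span S hx₀S
  -- choose a point y on the segment from x₀ to z₀ inside interior (N S)
  set c : ℝ → EuclideanSpace ℝ (Fin d) := fun t => x₀ + t • (z₀ - x₀) with hc
  have hccont : Continuous c := continuous_const.add (continuous_id.smul continuous_const)
  have hc0 : c 0 = x₀ := by simp [hc]
  have hpre : c ⁻¹' interior (st.N S) ∈ nhds (0 : ℝ) := by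
    apply hccont.continuousAt.preimage_mem_nhds
    rw [hc0]
    exact isOpen_interior.mem_nhds hx₀int
  obtain ⟨ε, hε, hball⟩ := Metric.mem_nhds_iff.mp hpre
  set t : ℝ := min (ε / 2) (1 / 2) with ht
  have ht0 : 0 < t := lt_min (by linarith) (by norm_num)
  have ht1 : t < 1 := lt_of_le_of_lt (min_le_right _ _) (by norm_num)
  have htball : t ∈ Metric.ball (0 : ℝ) ε := by
    rw [Metric.mem_ball, Real.dist_eq, sub_zero, abs_of_pos ht0]
    exact lt_of_le_of_lt (min_le_left _ _) (by linarith)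
  have hyint : c t ∈ interior (st.N S) := hball htball
  set y : EuclideanSpace ℝ (Fin d) := c t with hy
  have hyeq : y = (1 - t) • x₀ + t • z₀ := by
    rw [hy, hc]
    simp only
    module
  -- y belongs to some simplex containing splx S
  have hyN : y ∈ st.N S := interior_subset hyint
  obtain ⟨S'', hS''⟩ : ∃ S'', (S'' ∈ st.K ∧ splx S ⊆ splx S'') ∧ y ∈ splx S'' := by
    simpa [N, Set.mem_iUnion] using hyN
  obtain ⟨⟨hS''K, hless⟩, hySplx⟩ := hS''
  have hSsub'' : S ⊆ S'' := st.subset_of_splx_subset hS₁ hsub hS''K hless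
  -- the value of γ - ⟨v, ·⟩ at y is 0
  have hyω : y ∈ st.ω := st.splx_subset_ω hS''K hySplx
  have hvx₀ : ⟪v, x₀⟫ = st.γ x₀ := hvS x₀ hx₀S
  have hinner_y : ⟪v, y⟫ = (1 - t) * st.γ x₀ + t * st.γ z₀ := by
    rw [hyeq, inner_add_right, real_inner_smul_right, real_inner_smul_right, hvx₀, hz₀eq]
  have hγy_le : st.γ y ≤ (1 - t) * st.γ x₀ + t * st.γ z₀ := by
    have := st.convex_γ.2 (Set.mem_univ x₀) (Set.mem_univ z₀) (by linarith : (0:ℝ) ≤ 1 - t)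
      (le_of_lt ht0) (by ring : (1 - t) + t = 1)
    rw [← hyeq] at this
    simpa using this
  have heqy : ⟪v, y⟫ = st.γ y := le_antisymm (hv y hyω) (by rw [hinner_y]; exact hγy_le)
  -- y is not in the span of S
  have hyspan : y ∉ Submodule.span ℝ (S : Set (EuclideanSpace ℝ (Fin d))) := by
    intro hmem
    apply hz₀span
    have hz₀eq' : z₀ = t⁻¹ • (y - (1 - t) • x₀) := by
      rw [hyeq]
      rw [add_sub_cancel_left, smul_smul, inv_mul_cancel₀ (ne_of_gt ht0), one_smul]
    rw [hz₀eq']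
    exact Submodule.smul_mem _ _ (Submodule.sub_mem _ hmem (Submodule.smul_mem _ _ hx₀span))
  -- convex combination representation of y in splx S''
  have hySplx' : y ∈ convexHull ℝ ((insert (0 : EuclideanSpace ℝ (Fin d)) S'' : Finset _) :
      Set (EuclideanSpace ℝ (Fin d))) := by
    rwa [Finset.coe_insert]
  rw [Finset.convexHull_eq] at hySplx'
  obtain ⟨a, ha0, ha1, hay⟩ := hySplx'
  rw [Finset.centerMass_eq_of_sum_1 _ id ha1] at hay
  simp only [id_eq] at hay
  -- find a vertex with nonzero weight outside the span of S
  obtain ⟨z', hz'mem, hz'a, hz'span⟩ : ∃ z' ∈ insert (0 : EuclideanSpace ℝ (Fin d)) S'',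
      a z' ≠ 0 ∧ z' ∉ Submodule.span ℝ (S : Set (EuclideanSpace ℝ (Fin d))) := by
    by_contra hcon
    push_neg at hcon
    apply hyspan
    rw [← hay]
    refine Submodule.sum_mem _ fun z hz => ?_
    by_cases haz : a z = 0
    · rw [haz, zero_smul]; exact Submodule.zero_mem _
    · exact Submodule.smul_mem _ _ (hcon z hz haz)
  have hz'S'' : z' ∈ S'' := by
    rcases Finset.mem_insert.mp hz'mem with rfl | h
    · exact absurd (Submodule.zero_mem _) hz'span
    · exact h
  -- γ is linear on splx S''; complementarity
  obtain ⟨p, hp⟩ := st.exists_linear hS''K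
  have hterm_nonneg : ∀ z ∈ insert (0 : EuclideanSpace ℝ (Fin d)) S'',
      0 ≤ a z * ⟪p - v, z⟫ := by
    intro z hz
    refine mul_nonneg (ha0 z hz) ?_
    rcases Finset.mem_insert.mp hz with rfl | h
    · simp
    · have hzsplx : z ∈ splx S'' := vertex_mem_splx h
      have h1 : ⟪v, z⟫ ≤ st.γ z := hv z (st.vertex_mem_ω hS''K h)
      rw [inner_sub_left, ← hp z hzsplx]
      linarith
  have hsum_zero : ∑ z ∈ insert (0 : EuclideanSpace ℝ (Fin d)) S'', a z * ⟪p - v, z⟫ = 0 := by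
    have : ∑ z ∈ insert (0 : EuclideanSpace ℝ (Fin d)) S'', a z * ⟪p - v, z⟫ = ⟪p - v, y⟫ := by
      rw [← hay, inner_sum]
      refine Finset.sum_congr rfl fun z _ => ?_
      rw [real_inner_smul_right]
    rw [this, inner_sub_left, ← hp y hySplx, heqy, sub_self]
  have hterm_zero := (Finset.sum_eq_zero_iff_of_nonneg hterm_nonneg).mp hsum_zero
  have hz'term := hterm_zero z' hz'mem
  have hz'inner : ⟪p - v, z'⟫ = 0 := by
    rcases mul_eq_zero.mp hz'term with h | h
    · exact absurd h hz'a
    · exact h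
  refine ⟨z', S'', hS''K, hSsub'', hz'S'', hz'span, ?_⟩
  rw [inner_sub_left, sub_eq_zero] at hz'inner
  rw [← hz'inner, ← hp z' (vertex_mem_splx hz'S'')]

end StarSetup

/-- **Characterization of the dual set, second part.**
For an `n`-dimensional face `T = conv({0} ∪ S)` (`S.card = n`, `n < d`) meeting the interior
of `N(T)`, the boundary of `T*` relative to the affine subspace
`P = { w : ⟨w, z⟩ = γ(z) ∀ z ∈ T }` is the union of the dual sets of the
`(n+1)`-dimensional faces of the star containing `T`. -/
theorem stmt_17 (d : ℕ) (hd : 2 ≤ d) (st : StarSetup d) (n : ℕ) (hn : n < d)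
    (S : Finset (EuclideanSpace ℝ (Fin d))) (hS : st.IsFace S) (hcard : S.card = n)
    (hint : ∃ x ∈ splx S, x ∈ interior (st.N S)) :
    Subtype.val ''
        (frontier {w : {w : EuclideanSpace ℝ (Fin d) // ∀ z ∈ splx S, ⟪w, z⟫ = st.γ z} |
          (w : EuclideanSpace ℝ (Fin d)) ∈ st.dual S})
      = ⋃ S' ∈ {S' : Finset (EuclideanSpace ℝ (Fin d)) |
          st.IsFace S' ∧ S ⊆ S' ∧ S'.card = n + 1}, st.dual S' := by
    classical
  obtain ⟨x₀, hx₀S, hx₀int⟩ := hint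
  obtain ⟨S₁, hS₁, hsub⟩ := hS
  have hAeq : {w : {w : EuclideanSpace ℝ (Fin d) // ∀ z ∈ splx S, ⟪w, z⟫ = st.γ z} |
      (w : EuclideanSpace ℝ (Fin d)) ∈ st.dual S} =
      {w : {w : EuclideanSpace ℝ (Fin d) // ∀ z ∈ splx S, ⟪w, z⟫ = st.γ z} |
      (w : EuclideanSpace ℝ (Fin d)) ∈ st.subdiff} := by
    ext w
    exact ⟨fun h => h.1, fun h => ⟨h, w.2⟩⟩
  rw [hAeq]
  ext v
  simp only [Set.mem_image, Set.mem_iUnion, Set.mem_setOf_eq, exists_prop]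
  constructor
  · rintro ⟨w, hwf, rfl⟩
    rw [st.frontier_char S w] at hwf
    obtain ⟨hwsub, z₀, hz₀Z, hz₀span, hz₀eq⟩ := hwf
    obtain ⟨z', S'', hS''K, hS''sub, hz'S'', hz'span, hz'eq⟩ :=
      st.geometric_core hS₁ hsub hx₀S hx₀int hwsub w.2 hz₀span hz₀eq
    have hz'notS : z' ∉ S := fun h => hz'span (Submodule.subset_span (Finset.mem_coe.mpr h))
    refine ⟨insert z' S, ⟨⟨S'', hS''K, Finset.insert_subset_iff.mpr ⟨hz'S'', hS''sub⟩⟩,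
      Finset.subset_insert _ _, by rw [Finset.card_insert_of_notMem hz'notS, hcard]⟩, ?_⟩
    refine ⟨hwsub, ?_⟩
    refine st.inner_eq_on_splx hS''K (Finset.insert_subset_iff.mpr ⟨hz'S'', hS''sub⟩) ?_
    intro z hz
    rcases Finset.mem_insert.mp hz with rfl | hzS
    · exact hz'eq
    · exact w.2 z (StarSetup.vertex_mem_splx hzS)
  · rintro ⟨S', ⟨⟨hface, hSsub', hcard'⟩, hvdual⟩⟩
    have hvP : ∀ z ∈ splx S, ⟪v, z⟫ = st.γ z := fun z hz =>
      hvdual.2 z (StarSetup.splx_mono hSsub' hz)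
    refine ⟨⟨v, hvP⟩, ?_, rfl⟩
    rw [st.frontier_char S ⟨v, hvP⟩]
    refine ⟨hvdual.1, ?_⟩
    obtain ⟨z₀, hz₀S', hz₀notS⟩ : ∃ z₀, z₀ ∈ S' ∧ z₀ ∉ S := by
      have hss : S ⊂ S' := Finset.ssubset_iff_subset_ne.mpr ⟨hSsub', by
        intro h; rw [h, hcard'] at hcard; omega⟩
      exact Finset.exists_of_ssubset hss
    obtain ⟨S₂, hS₂K, hS'sub₂⟩ := hface
    refine ⟨z₀, ⟨S₂, hS₂K, hS'sub₂ hz₀S'⟩, ?_, hvdual.2 z₀ (StarSetup.vertex_mem_splx hz₀S')⟩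
    refine st.not_mem_span hS₂K (hS'sub₂ hz₀S')
      (Finset.coe_subset.mpr (hSsub'.trans hS'sub₂)) ?_
    simpa using hz₀notS

end
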